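/- arXiv:1810.12699 — 4 statements merged into one kernel-verified Lean document; each statement's English description precedes it below -/
import Mathlib

section
/- Let α ∈ (0,2) and let p be a symmetric transition rate with p(1) > 0 and p ∈ DAN(α). Then there exists a constant κ₂ ∈ (0,∞) such that for every n ∈ ℕ there is a non-identically-zero function f : Λ_n → ℝ with ∑_{x∈Λ_n} f(x) = 0 and (1/2) ∑_{x∈Λ_n} ∑_{y∈Λ_n} p(y-x) (f(y)-f(x))² ≤ κ₂ (2n+1)^{-α} ∑_{x∈Λ_n} f(x)². Equivalently, the spectral gap λ_n of the random walk on Λ_n with jump rates r(x,y) = p(y-x) satisfies λ_n ≤ κ₂ (2n+1)^{-α}. -/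
open Finset Filter Topology

/-- A symmetric transition rate: `p(0) = 0`, `p` symmetric, summable, nonnegative
and not identically zero. -/
def IsSymTransitionRate (p : ℤ → ℝ) : Prop :=
  (∀ z : ℤ, 0 ≤ p z) ∧ p 0 = 0 ∧ (∀ z : ℤ, p z = p (-z)) ∧ Summable p ∧ (∃ z : ℤ, p z ≠ 0)

/-- `p` is in the domain of normal attraction of an `α`-stable law. -/
def MemDAN (p : ℤ → ℝ) (α : ℝ) : Prop :=
  ∃ c : ℝ, 0 < c ∧
    Tendsto (fun x : ℕ => (x : ℝ) ^ α * ∑' k : ℕ, p ((x : ℤ) + (k : ℤ)))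
      atTop (nhds c)

/-! Test the Dirichlet form against the odd function `f x = x`. Each row of the Dirichlet form
on `Λ_n` is at most the truncated second moment `∑_{|z| ≤ 2n} p z z²`, and summation by parts
turns the tail bound `∑_{y ≥ x} p y ≤ C x^{-α}` given by `DAN(α)` into
`∑_{|z| ≤ m} p z z² = O(m^{2-α})` as soon as `α < 2`. So the Dirichlet form is `O(n^{3-α})`,
while `∑_{x ∈ Λ_n} x² ≍ n³`. -/

theorem sum_Icc_neg_natCast (g : ℤ → ℝ) (m : ℕ) :
    ∑ z ∈ Icc (-(m : ℤ)) m, g z = g 0 + ∑ k ∈ range m, (g (k + 1) + g (-(k + 1))) := by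
  induction m with
  | zero => simp
  | succ m ih =>
    have hIcc : Icc (-((m + 1 : ℕ) : ℤ)) (m + 1 : ℕ) =
        insert ((m : ℤ) + 1) (insert (-((m : ℤ) + 1)) (Icc (-(m : ℤ)) m)) := by
      ext z; simp only [mem_Icc, mem_insert]; omega
    rw [hIcc, sum_insert (by simp only [mem_insert, mem_Icc]; omega), sum_insert (by simp), ih,
      sum_range_succ]
    ring

theorem sum_Icc_neg_eq_zero_of_odd {g : ℤ → ℝ} (hg : ∀ z, g (-z) = -g z) (m : ℕ) :
    ∑ z ∈ Icc (-(m : ℤ)) m, g z = 0 := by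
  have hg0 : g 0 = 0 := by linarith [neg_zero (G := ℤ) ▸ hg 0]
  simp only [sum_Icc_neg_natCast, hg, hg0, add_neg_cancel, sum_const_zero, add_zero]

theorem sum_Icc_neg_sq (n : ℕ) :
    ∑ z ∈ Icc (-(n : ℤ)) n, (z : ℝ) ^ 2 = n * (n + 1) * (2 * n + 1) / 3 := by
  rw [sum_Icc_neg_natCast]
  induction n with
  | zero => simp
  | succ n ih => rw [sum_range_succ, ← add_assoc, ih]; push_cast; ring

theorem cube_div_le_sum_Icc_neg_sq {n : ℕ} (hn : 1 ≤ n) :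
    (2 * (n : ℝ) + 1) ^ 3 / 27 ≤ ∑ z ∈ Icc (-(n : ℤ)) n, (z : ℝ) ^ 2 := by
  rw [sum_Icc_neg_sq]
  have hn' : (1 : ℝ) ≤ n := by exact_mod_cast hn
  nlinarith [mul_nonneg (by positivity : (0 : ℝ) ≤ 2 * n + 1)
    (by nlinarith : (0 : ℝ) ≤ 5 * n ^ 2 + 5 * n - 1)]

theorem sum_Icc_comp_sub_le {g : ℤ → ℝ} (hg : ∀ z, 0 ≤ g z) {a b x : ℤ} (hx : x ∈ Icc a b) :
    ∑ y ∈ Icc a b, g (y - x) ≤ ∑ z ∈ Icc (a - b) (b - a), g z := by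
  rw [← sum_image (g := fun y => y - x) (by intro _ _ _ _ h; simpa using h)]
  refine sum_le_sum_of_subset_of_nonneg ?_ (fun z _ _ => hg z)
  intro z hz
  simp only [mem_image, mem_Icc] at hz hx ⊢
  omega

theorem sum_range_mul_sq_le_sum_mul_tsum {q : ℕ → ℝ} (hq : ∀ k, 0 ≤ q k) (hsum : Summable q)
    (m : ℕ) :
    ∑ k ∈ range m, q k * ((k : ℝ) + 1) ^ 2 ≤
      ∑ j ∈ range m, (2 * (j : ℝ) + 1) * ∑' i, q (i + j) := by
  have hodd (k : ℕ) : ((k : ℝ) + 1) ^ 2 = ∑ j ∈ range (k + 1), (2 * (j : ℝ) + 1) := by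
    induction k with
    | zero => simp
    | succ k ih => rw [sum_range_succ, ← ih]; push_cast; ring
  have hswap : ∑ k ∈ range m, q k * ((k : ℝ) + 1) ^ 2 =
      ∑ j ∈ range m, (2 * (j : ℝ) + 1) * ∑ k ∈ Ico j m, q k := by
    simp_rw [hodd, mul_sum, range_eq_Ico, sum_Ico_Ico_comm 0 m, mul_comm]
  rw [hswap]
  gcongr with j
  rw [sum_Ico_eq_sum_range]
  simp_rw [add_comm j]
  exact ((summable_nat_add_iff j).mpr hsum).sum_le_tsum _ (fun i _ => hq _)

theorem mul_rpow_sub_one_le_rpow_sub_rpow {s x : ℝ} (hs0 : 0 ≤ s) (hs1 : s ≤ 1) (hx : 1 ≤ x) :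
    s * x ^ (s - 1) ≤ x ^ s - (x - 1) ^ s := by
  have hx0 : 0 < x := by linarith
  have hbern : (1 + -x⁻¹) ^ s ≤ 1 + s * -x⁻¹ :=
    rpow_one_add_le_one_add_mul_self (by linarith [inv_le_one_of_one_le₀ hx]) hs0 hs1
  have hsplit : (x - 1) ^ s = (1 + -x⁻¹) ^ s * x ^ s := by
    rw [← Real.mul_rpow (by linarith [inv_le_one_of_one_le₀ hx]) hx0.le]
    congr 1
    field_simp
    ring
  rw [hsplit, Real.rpow_sub_one hx0.ne']
  have := mul_le_mul_of_nonneg_right hbern (Real.rpow_nonneg hx0.le s)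
  linarith [show (1 + s * -x⁻¹) * x ^ s = x ^ s - s * (x ^ s / x) by field_simp; ring]

theorem sum_range_rpow_le {r : ℝ} (hr : -1 < r) (m : ℕ) :
    ∑ k ∈ range m, ((k : ℝ) + 1) ^ r ≤ max 1 (r + 1)⁻¹ * (m : ℝ) ^ (r + 1) := by
  have hm : (0 : ℝ) ≤ m := m.cast_nonneg
  rcases le_or_gt 0 r with hr0 | hr0
  · calc ∑ k ∈ range m, ((k : ℝ) + 1) ^ r
        ≤ ∑ _k ∈ range m, (m : ℝ) ^ r := by
          gcongr with k hk
          exact_mod_cast mem_range.mp hk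
      _ = (m : ℝ) ^ (r + 1) := by
          rw [sum_const, card_range, nsmul_eq_mul, Real.rpow_add_one' hm (by linarith), mul_comm]
      _ ≤ max 1 (r + 1)⁻¹ * (m : ℝ) ^ (r + 1) :=
          le_mul_of_one_le_left (by positivity) (le_max_left _ _)
  · have hs : 0 < r + 1 := by linarith
    calc ∑ k ∈ range m, ((k : ℝ) + 1) ^ r
        ≤ ∑ k ∈ range m, (r + 1)⁻¹ * (((k + 1 : ℕ) : ℝ) ^ (r + 1) - (k : ℝ) ^ (r + 1)) := by
          gcongr with k
          rw [le_inv_mul_iff₀ hs]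
          have := mul_rpow_sub_one_le_rpow_sub_rpow hs.le (by linarith)
            (le_add_of_nonneg_left k.cast_nonneg)
          push_cast
          simpa using this
      _ = (r + 1)⁻¹ * (m : ℝ) ^ (r + 1) := by
          rw [← mul_sum, sum_range_sub (fun k : ℕ => (k : ℝ) ^ (r + 1)), Nat.cast_zero,
            Real.zero_rpow hs.ne', sub_zero]
      _ ≤ max 1 (r + 1)⁻¹ * (m : ℝ) ^ (r + 1) := by gcongr; exact le_max_right _ _

theorem MemDAN.exists_tsum_le {p : ℤ → ℝ} {α : ℝ} (h : MemDAN p α) :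
    ∃ C > 0, ∀ x : ℕ, 1 ≤ x → ∑' k : ℕ, p (x + k) ≤ C * (x : ℝ) ^ (-α) := by
  obtain ⟨c, -, hc⟩ := h
  obtain ⟨C, hC⟩ := hc.bddAbove_range
  refine ⟨max C 1, by positivity, fun x hx => ?_⟩
  have hxα : 0 < (x : ℝ) ^ α := Real.rpow_pos_of_pos (by exact_mod_cast hx) α
  rw [Real.rpow_neg x.cast_nonneg, ← div_eq_mul_inv, le_div_iff₀ hxα, mul_comm]
  exact (hC ⟨x, rfl⟩).trans (le_max_left _ _)

theorem sum_Icc_neg_mul_sq_le {p : ℤ → ℝ} {α C : ℝ} (hα : α < 2) (hC : 0 ≤ C)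
    (hp : ∀ z, 0 ≤ p z) (hsymm : ∀ z, p z = p (-z)) (hsum : Summable p)
    (htail : ∀ x : ℕ, 1 ≤ x → ∑' k : ℕ, p (x + k) ≤ C * (x : ℝ) ^ (-α)) (m : ℕ) :
    ∑ z ∈ Icc (-(m : ℤ)) m, p z * (z : ℝ) ^ 2 ≤ 4 * C * max 1 (2 - α)⁻¹ * (m : ℝ) ^ (2 - α) := by
  set q : ℕ → ℝ := fun k => p (k + 1)
  have hq : Summable q := hsum.comp_injective (fun a b h => by simpa [q] using h)
  have hfold : ∑ z ∈ Icc (-(m : ℤ)) m, p z * (z : ℝ) ^ 2 =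
      2 * ∑ k ∈ range m, q k * ((k : ℝ) + 1) ^ 2 := by
    rw [sum_Icc_neg_natCast, mul_sum]
    simp only [q, ← hsymm, Int.cast_zero, Int.cast_neg, Int.cast_add, Int.cast_natCast,
      Int.cast_one, neg_sq, ← two_mul, zero_pow two_ne_zero, mul_zero, zero_add]
  have htail_q (j : ℕ) :
      (2 * (j : ℝ) + 1) * ∑' i, q (i + j) ≤ 2 * C * ((j : ℝ) + 1) ^ (1 - α) := by
    have hj : (0 : ℝ) < j + 1 := by positivity
    have h := htail (j + 1) (by omega)
    simp only [Nat.cast_add, Nat.cast_one] at h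
    calc (2 * (j : ℝ) + 1) * ∑' i, q (i + j)
        ≤ 2 * ((j : ℝ) + 1) * (C * ((j : ℝ) + 1) ^ (-α)) := by
          gcongr
          · exact tsum_nonneg fun i => hp _
          · linarith
          · refine le_of_eq_of_le (tsum_congr fun i => ?_) h
            show p _ = _; push_cast; ring_nf
      _ = 2 * C * ((j : ℝ) + 1) ^ (1 - α) := by
          rw [sub_eq_add_neg, Real.rpow_add hj, Real.rpow_one]; ring
  have hpow := sum_range_rpow_le (r := 1 - α) (by linarith) m
  rw [show 1 - α + 1 = 2 - α by ring] at hpow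
  calc ∑ z ∈ Icc (-(m : ℤ)) m, p z * (z : ℝ) ^ 2
      ≤ 2 * ∑ j ∈ range m, (2 * (j : ℝ) + 1) * ∑' i, q (i + j) := by
        rw [hfold]
        exact mul_le_mul_of_nonneg_left (sum_range_mul_sq_le_sum_mul_tsum (fun k => hp _) hq m)
          two_pos.le
    _ ≤ 2 * ∑ j ∈ range m, 2 * C * ((j : ℝ) + 1) ^ (1 - α) :=
        mul_le_mul_of_nonneg_left (sum_le_sum fun j _ => htail_q j) two_pos.le
    _ = 4 * C * ∑ j ∈ range m, ((j : ℝ) + 1) ^ (1 - α) := by rw [← mul_sum]; ring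
    _ ≤ 4 * C * max 1 (2 - α)⁻¹ * (m : ℝ) ^ (2 - α) := by rw [mul_assoc _ (max _ _)]; gcongr

theorem sum_Icc_sum_Icc_mul_sq_sub_le {p : ℤ → ℝ} (hp : ∀ z, 0 ≤ p z) (n : ℕ) :
    ∑ x ∈ Icc (-(n : ℤ)) n, ∑ y ∈ Icc (-(n : ℤ)) n, p (y - x) * ((y : ℝ) - x) ^ 2 ≤
      (2 * n + 1) * ∑ z ∈ Icc (-((2 * n : ℕ) : ℤ)) (2 * n : ℕ), p z * (z : ℝ) ^ 2 := by
  have hcard : (#(Icc (-(n : ℤ)) n) : ℝ) = 2 * n + 1 := by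
    rw [Int.card_Icc, show (n : ℤ) + 1 - -n = ((2 * n + 1 : ℕ) : ℤ) by push_cast; ring,
      Int.toNat_natCast]
    push_cast; ring
  rw [← hcard, ← nsmul_eq_mul]
  refine sum_le_card_nsmul _ _ _ fun x hx => ?_
  have hIcc : Icc (-((2 * n : ℕ) : ℤ)) (2 * n : ℕ) = Icc (-(n : ℤ) - n) (n - -n) := by
    congr 1 <;> push_cast <;> ring
  rw [hIcc]
  refine le_of_eq_of_le (sum_congr rfl fun y _ => ?_)
    (sum_Icc_comp_sub_le (g := fun z => p z * (z : ℝ) ^ 2) (fun z => by positivity [hp z]) hx)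
  push_cast; rfl

theorem spectral_gap_upper_bound_general
    (α : ℝ) (hα2 : α < 2)
    (p : ℤ → ℝ) (hp : IsSymTransitionRate p)
    (hDAN : MemDAN p α) :
    ∃ κ₂ : ℝ, 0 < κ₂ ∧ ∀ n : ℕ, 1 ≤ n → ∃ f : ℤ → ℝ,
      (∃ x ∈ Finset.Icc (-(n : ℤ)) n, f x ≠ 0) ∧
      (∑ x ∈ Finset.Icc (-(n : ℤ)) n, f x) = 0 ∧
      (1 / 2) * ∑ x ∈ Finset.Icc (-(n : ℤ)) n, ∑ y ∈ Finset.Icc (-(n : ℤ)) n,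
          p (y - x) * (f y - f x) ^ 2 ≤
        κ₂ * (2 * (n : ℝ) + 1) ^ (-α) * ∑ x ∈ Finset.Icc (-(n : ℤ)) n, (f x) ^ 2 := by
  obtain ⟨hp0, -, hsymm, hsum, -⟩ := hp
  obtain ⟨C, hC, htail⟩ := hDAN.exists_tsum_le
  set K := max 1 (2 - α)⁻¹
  refine ⟨54 * C * K, by positivity, fun n hn => ⟨fun x => x,
    ⟨1, mem_Icc.mpr ⟨by omega, by omega⟩, by norm_num⟩,
    sum_Icc_neg_eq_zero_of_odd (fun z => Int.cast_neg z) n, ?_⟩⟩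
  set N : ℝ := 2 * n + 1
  have hN : 0 < N := by positivity
  have hmoment := sum_Icc_neg_mul_sq_le hα2 hC.le hp0 hsymm hsum htail (2 * n)
  have hpow : N * N ^ (2 - α) = N ^ (-α) * N ^ 3 := by
    rw [← Real.rpow_one_add' hN.le (by linarith), ← Real.rpow_natCast, ← Real.rpow_add hN]
    norm_num; ring_nf
  calc (1 / 2) * ∑ x ∈ Icc (-(n : ℤ)) n, ∑ y ∈ Icc (-(n : ℤ)) n, p (y - x) * ((y : ℝ) - x) ^ 2
      ≤ (1 / 2) * (N * (4 * C * K * N ^ (2 - α))) := by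
        gcongr
        refine (sum_Icc_sum_Icc_mul_sq_sub_le hp0 n).trans ?_
        gcongr
        exact hmoment.trans (by gcongr; push_cast; linarith)
    _ = 54 * C * K * N ^ (-α) * (N ^ 3 / 27) := by linear_combination 2 * C * K * hpow
    _ ≤ 54 * C * K * N ^ (-α) * ∑ x ∈ Icc (-(n : ℤ)) n, (x : ℝ) ^ 2 := by
        gcongr; exact cube_div_le_sum_Icc_neg_sq hn

theorem spectral_gap_upper_bound
    (α : ℝ) (hα0 : 0 < α) (hα2 : α < 2)
    (p : ℤ → ℝ) (hp : IsSymTransitionRate p) (hp1 : 0 < p 1)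
    (hDAN : MemDAN p α) :
    ∃ κ₂ : ℝ, 0 < κ₂ ∧ ∀ n : ℕ, 1 ≤ n → ∃ f : ℤ → ℝ,
      (∃ x ∈ Finset.Icc (-(n : ℤ)) n, f x ≠ 0) ∧
      (∑ x ∈ Finset.Icc (-(n : ℤ)) n, f x) = 0 ∧
      (1 / 2) * ∑ x ∈ Finset.Icc (-(n : ℤ)) n, ∑ y ∈ Finset.Icc (-(n : ℤ)) n,
          p (y - x) * (f y - f x) ^ 2 ≤
        κ₂ * (2 * (n : ℝ) + 1) ^ (-α) * ∑ x ∈ Finset.Icc (-(n : ℤ)) n, (f x) ^ 2 :=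
  spectral_gap_upper_bound_general α hα2 p hp hDAN
end

section
/- Let α ∈ (0,2) and let p be a symmetric transition rate with p(1) > 0 and p ∈ DAN(α). Then there exists a constant κ₂^ex ∈ (0,∞) such that for every n ∈ ℕ and every ℓ ∈ {1,...,2n} there is a non-identically-zero function f : Ω_{n,ℓ}^ex → ℝ with ∑_{η∈Ω_{n,ℓ}^ex} f(η) = 0 and (1/2) ∑_{η∈Ω_{n,ℓ}^ex} ∑_{x,y∈Λ_n} p(y-x) η_x (1-η_y) (f(η^{x,y}) - f(η))² ≤ κ₂^ex (2n+1)^{-α} ∑_{η∈Ω_{n,ℓ}^ex} f(η)². Equivalently, the spectral gap of the exclusion process with transition rate p on Ω_{n,ℓ}^ex satisfies λ_{n,ℓ}^ex ≤ κ₂^ex (2n+1)^{-α}. -/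
/-
Test the variational formula with the centre of mass `f η = ∑ x ∈ η, x`, which is centred because
`Λ_n` is symmetric. Counting the `ℓ`-subsets that contain `x` but not `y` shows that the Dirichlet
form and the variance of `f` are the same binomial multiple of `∑_{x,y ∈ Λ_n} p(y-x)(y-x)²` and of
`∑_{x ∈ Λ_n} x² ≍ n³` respectively. The DAN hypothesis bounds the tails `∑_{z ≥ x} p(z) ≲ x^{-α}`,
and summation by parts turns this into `∑_{|z| ≤ 2n} p(z) z² ≲ n^{2-α}`, so the first sum is
`≲ n^{3-α}`.
-/

open Finset Filter Topology

/-- Exclusion configurations on `Λ_n = {-n,…,n}` with `ℓ` particles, encoded as the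
set of occupied sites: subsets of `Λ_n` of cardinality `ℓ`. -/
noncomputable def exConfigs (n ℓ : ℕ) : Finset (Finset ℤ) :=
  Finset.powersetCard ℓ (Finset.Icc (-(n : ℤ)) n)

/-- The configuration `η^{x,y}` when `x` is occupied and `y` is empty: the particle
at `x` moves to `y`. -/
def exSwap (η : Finset ℤ) (x y : ℤ) : Finset ℤ := insert y (η.erase x)

section Sampling

variable {α R : Type*} [DecidableEq α] [CommRing R] {s : Finset α}

theorem card_filter_mem_powersetCard_succ {a : α} (ha : a ∈ s) (k : ℕ) :
    #{η ∈ powersetCard (k + 1) s | a ∈ η} = (#s - 1).choose k := by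
  rw [← card_erase_of_mem ha, ← card_powersetCard]
  refine card_nbij' (·.erase a) (insert a) ?_ ?_ ?_ ?_ <;> intro η hη <;>
    simp only [coe_filter, mem_coe, mem_powersetCard, subset_erase] at hη ⊢
  · simp [card_erase_of_mem hη.2, hη.1.2, (erase_subset a η).trans hη.1.1]
  · simp [card_insert_of_notMem hη.1.2, hη.2, insert_subset ha hη.1.1]
  · exact insert_erase hη.2
  · exact erase_insert hη.1.2

theorem card_filter_mem_and_notMem_powersetCard_succ {a b : α} (ha : a ∈ s) (hb : b ∈ s)
    (hab : a ≠ b) (k : ℕ) :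
    #{η ∈ powersetCard (k + 1) s | a ∈ η ∧ b ∉ η} = (#s - 2).choose k := by
  have hfilter : {η ∈ powersetCard (k + 1) s | a ∈ η ∧ b ∉ η}
      = {η ∈ powersetCard (k + 1) (s.erase b) | a ∈ η} := by
    ext η
    simp only [mem_filter, mem_powersetCard, subset_erase]
    tauto
  rw [hfilter, card_filter_mem_powersetCard_succ (mem_erase.2 ⟨hab, ha⟩), card_erase_of_mem hb]
  rfl

theorem sum_sum_ite_mem_and_notMem {M : Type*} [AddCommMonoid M] {η : Finset α} (hη : η ⊆ s)
    (g : α → α → M) :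
    ∑ x ∈ s, ∑ y ∈ s, (if x ∈ η ∧ y ∉ η then g x y else 0)
      = ∑ x ∈ η, ∑ y ∈ s \ η, g x y := by
  have hrow : ∀ x, ∑ y ∈ s, (if x ∈ η ∧ y ∉ η then g x y else 0)
      = if x ∈ η then ∑ y ∈ s \ η, g x y else 0 := by
    intro x
    by_cases hx : x ∈ η
    · simp only [hx, true_and, if_true]
      rw [← sum_filter, filter_notMem_eq_sdiff]
    · simp [hx]
  rw [sum_congr rfl fun x _ => hrow x, sum_ite_mem, inter_eq_right.2 hη]

theorem sum_powersetCard_succ_sum (w : α → R) (k : ℕ) :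
    ∑ η ∈ powersetCard (k + 1) s, ∑ u ∈ η, w u = (#s - 1).choose k * ∑ x ∈ s, w x := by
  rw [sum_comm' (t' := s) (s' := fun x => {η ∈ powersetCard (k + 1) s | x ∈ η})]
  · rw [mul_sum]
    refine sum_congr rfl fun x hx => ?_
    rw [sum_const, card_filter_mem_powersetCard_succ hx, nsmul_eq_mul]
  · intro η x
    simp only [mem_filter, mem_powersetCard]
    exact ⟨fun ⟨hη, hx⟩ => ⟨⟨hη, hx⟩, hη.1 hx⟩, fun h => h.1⟩

theorem sum_powersetCard_succ_sum_sum_sdiff (g : α → α → R) (k : ℕ) :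
    ∑ η ∈ powersetCard (k + 1) s, ∑ x ∈ η, ∑ y ∈ s \ η, g x y
      = (#s - 2).choose k * ∑ x ∈ s, ∑ y ∈ s.erase x, g x y := by
  calc ∑ η ∈ powersetCard (k + 1) s, ∑ x ∈ η, ∑ y ∈ s \ η, g x y
      = ∑ x ∈ s, ∑ y ∈ s, ∑ η ∈ powersetCard (k + 1) s,
          (if x ∈ η ∧ y ∉ η then g x y else 0) := by
        rw [sum_congr rfl fun η hη =>
          (sum_sum_ite_mem_and_notMem (mem_powersetCard.1 hη).1 g).symm, sum_comm]
        exact sum_congr rfl fun x _ => sum_comm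
    _ = ∑ x ∈ s, ∑ y ∈ s.erase x, (#s - 2).choose k * g x y := by
        refine sum_congr rfl fun x hx => ?_
        rw [← add_sum_erase s _ hx]
        simp only [and_not_self, if_false, sum_const_zero, zero_add]
        refine sum_congr rfl fun y hy => ?_
        rw [← sum_filter, sum_const, nsmul_eq_mul,
          card_filter_mem_and_notMem_powersetCard_succ hx (mem_of_mem_erase hy)
            (ne_of_mem_erase hy).symm]
    _ = (#s - 2).choose k * ∑ x ∈ s, ∑ y ∈ s.erase x, g x y := by
        simp only [mul_sum]

theorem sum_powersetCard_succ_sq_sum {w : α → R} (hw : ∑ x ∈ s, w x = 0) (k : ℕ) :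
    ∑ η ∈ powersetCard (k + 1) s, (∑ u ∈ η, w u) ^ 2
      = (#s - 2).choose k * ∑ x ∈ s, w x ^ 2 := by
  have hsq : ∀ η ∈ powersetCard (k + 1) s,
      (∑ u ∈ η, w u) ^ 2 = -∑ x ∈ η, ∑ y ∈ s \ η, w x * w y := by
    intro η hη
    rw [← sum_mul_sum, sum_sdiff_eq_sub (mem_powersetCard.1 hη).1, hw]
    ring
  have hdiag : ∀ x ∈ s, ∑ y ∈ s.erase x, w x * w y = -w x ^ 2 := by
    intro x hx
    rw [← mul_sum, sum_erase_eq_sub hx, hw]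
    ring
  rw [sum_congr rfl hsq, sum_neg_distrib, sum_powersetCard_succ_sum_sum_sdiff,
    sum_congr rfl hdiag, sum_neg_distrib]
  ring

end Sampling

theorem sum_Icc_neg_self {M : Type*} [AddCommMonoid M] (g : ℤ → M) (m : ℕ) :
    ∑ z ∈ Icc (-(m : ℤ)) m, g z = g 0 + ∑ k ∈ Icc 1 m, (g k + g (-k)) := by
  induction m with
  | zero => simp
  | succ m ih =>
    have hIcc : Icc (-((m + 1 : ℕ) : ℤ)) (m + 1 : ℕ)
        = insert (-((m + 1 : ℕ) : ℤ)) (insert ((m + 1 : ℕ) : ℤ) (Icc (-(m : ℤ)) m)) := by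
      ext z
      simp only [mem_Icc, mem_insert]
      omega
    rw [hIcc, sum_insert (by simp; omega), sum_insert (by simp), ih, sum_Icc_succ_top (by omega)]
    abel

theorem card_Icc_neg_self (n : ℕ) : #(Icc (-(n : ℤ)) n) = 2 * n + 1 := by
  rw [Int.card_Icc]
  omega

theorem sum_Icc_neg_self_intCast (n : ℕ) : ∑ x ∈ Icc (-(n : ℤ)) n, (x : ℝ) = 0 := by
  simp [sum_Icc_neg_self]

theorem sum_Icc_sq_mul_six (n : ℕ) :
    6 * ∑ k ∈ Icc 1 n, (k : ℝ) ^ 2 = n * (n + 1) * (2 * n + 1) := by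
  induction n with
  | zero => simp
  | succ n ih =>
    rw [sum_Icc_succ_top (by omega), mul_add, ih]
    push_cast
    ring

theorem pow_three_le_sum_Icc_neg_self_sq {n : ℕ} (hn : 1 ≤ n) :
    (2 * (n : ℝ) + 1) ^ 3 ≤ 14 * ∑ x ∈ Icc (-(n : ℤ)) n, (x : ℝ) ^ 2 := by
  have hsum : 3 * ∑ x ∈ Icc (-(n : ℤ)) n, (x : ℝ) ^ 2 = n * (n + 1) * (2 * n + 1) := by
    simp only [sum_Icc_neg_self, Int.cast_zero, Int.cast_neg, Int.cast_natCast, neg_sq,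
      ← two_mul, ← mul_sum]
    linear_combination sum_Icc_sq_mul_six n
  have hn' : (1 : ℝ) ≤ n := by exact_mod_cast hn
  have hsq : 3 * (2 * (n : ℝ) + 1) ^ 2 ≤ 14 * (n * (n + 1)) := by nlinarith
  nlinarith [mul_le_mul_of_nonneg_left hsq (by positivity : (0 : ℝ) ≤ 2 * n + 1)]

theorem add_one_rpow_sub_one_le_mul_rpow_sub_rpow {β t : ℝ} (hβ : 0 < β) (ht : 0 ≤ t) :
    (t + 1) ^ (β - 1) ≤ (1 + β⁻¹) * ((t + 1) ^ β - t ^ β) := by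
  have ht1 : 0 < t + 1 := by linarith
  rcases le_total 1 β with hβ1 | hβ1
  · have hmono : t ^ (β - 1) ≤ (t + 1) ^ (β - 1) :=
      Real.rpow_le_rpow ht (by linarith) (by linarith)
    have hsplit : ∀ u : ℝ, 0 ≤ u → u ^ β = u * u ^ (β - 1) := fun u hu => by
      rw [← Real.rpow_one_add' hu (by linarith), add_sub_cancel]
    have hdiff : (t + 1) ^ (β - 1) ≤ (t + 1) ^ β - t ^ β := by
      rw [hsplit t ht, hsplit (t + 1) ht1.le]
      nlinarith [Real.rpow_nonneg ht (β - 1)]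
    have hpos : 0 ≤ (t + 1) ^ β - t ^ β := (Real.rpow_nonneg ht1.le _).trans hdiff
    nlinarith [mul_nonneg (inv_nonneg.2 hβ.le) hpos]
  · -- Bernoulli's inequality at `s = -1/(t+1)`, multiplied by `(t+1)^β`
    have hinv : (t + 1)⁻¹ ≤ 1 := inv_le_one_of_one_le₀ (by linarith)
    have hbern := rpow_one_add_le_one_add_mul_self (s := -(t + 1)⁻¹) (by linarith) hβ.le hβ1
    have hfactor : t = (t + 1) * (1 + -(t + 1)⁻¹) := by field_simp; ring
    have hdiff : β * (t + 1) ^ (β - 1) ≤ (t + 1) ^ β - t ^ β := by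
      have := mul_le_mul_of_nonneg_left hbern (Real.rpow_nonneg ht1.le β)
      rw [← Real.mul_rpow ht1.le (by linarith), ← hfactor] at this
      rw [Real.rpow_sub_one ht1.ne']
      linear_combination this
    have h1 : (t + 1) ^ (β - 1) ≤ β⁻¹ * ((t + 1) ^ β - t ^ β) := by
      rw [le_inv_mul_iff₀ hβ]; exact hdiff
    nlinarith [Real.rpow_nonneg ht1.le (β - 1)]

theorem sum_Icc_rpow_sub_one_le {β : ℝ} (hβ : 0 < β) (m : ℕ) :
    ∑ x ∈ Icc 1 m, (x : ℝ) ^ (β - 1) ≤ (1 + β⁻¹) * (m : ℝ) ^ β := by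
  induction m with
  | zero => simp [Real.zero_rpow hβ.ne']
  | succ m ih =>
    rw [sum_Icc_succ_top (by omega)]
    have := add_one_rpow_sub_one_le_mul_rpow_sub_rpow hβ (Nat.cast_nonneg m)
    push_cast
    linarith

theorem sq_le_sum_Icc_two_mul (z : ℕ) : (z : ℝ) ^ 2 ≤ ∑ x ∈ Icc 1 z, 2 * (x : ℝ) := by
  induction z with
  | zero => simp
  | succ k ih =>
    rw [sum_Icc_succ_top (by omega)]
    push_cast
    nlinarith

theorem sum_Icc_mul_sq_le_of_tail_le {q : ℕ → ℝ} (hq : ∀ z, 0 ≤ q z) {α C : ℝ} (hα : α < 2)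
    (hC : 0 ≤ C) (htail : ∀ x m : ℕ, 0 < x → ∑ z ∈ Icc x m, q z ≤ C * (x : ℝ) ^ (-α))
    (m : ℕ) :
    ∑ z ∈ Icc 1 m, q z * (z : ℝ) ^ 2 ≤ 2 * C * (1 + (2 - α)⁻¹) * (m : ℝ) ^ (2 - α) := by
  calc ∑ z ∈ Icc 1 m, q z * (z : ℝ) ^ 2
      ≤ ∑ z ∈ Icc 1 m, ∑ x ∈ Icc 1 z, q z * (2 * (x : ℝ)) := by
        refine sum_le_sum fun z _ => ?_
        rw [← mul_sum]
        exact mul_le_mul_of_nonneg_left (sq_le_sum_Icc_two_mul z) (hq z)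
    _ = ∑ x ∈ Icc 1 m, (∑ z ∈ Icc x m, q z) * (2 * (x : ℝ)) := by
        simp only [sum_mul]
        refine sum_comm' fun z x => ?_
        simp only [mem_Icc]
        omega
    _ ≤ ∑ x ∈ Icc 1 m, 2 * C * (x : ℝ) ^ ((2 - α) - 1) := by
        refine sum_le_sum fun x hx => ?_
        have hx0 : (0 : ℝ) < x := by simp only [mem_Icc] at hx; exact_mod_cast hx.1
        calc (∑ z ∈ Icc x m, q z) * (2 * (x : ℝ)) ≤ C * (x : ℝ) ^ (-α) * (2 * x) :=
              mul_le_mul_of_nonneg_right (htail x m (by exact_mod_cast hx0)) (by positivity)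
          _ = 2 * C * (x : ℝ) ^ ((2 - α) - 1) := by
              rw [show (2 - α) - 1 = -α + 1 by ring, Real.rpow_add_one hx0.ne']
              ring
    _ ≤ 2 * C * (1 + (2 - α)⁻¹) * (m : ℝ) ^ (2 - α) := by
        rw [← mul_sum, mul_assoc (2 * C)]
        exact mul_le_mul_of_nonneg_left
          (sum_Icc_rpow_sub_one_le (β := 2 - α) (by linarith) m) (by linarith)

theorem MemDAN.exists_sum_Icc_le {p : ℤ → ℝ} {α : ℝ} (hDAN : MemDAN p α)
    (hnn : ∀ z, 0 ≤ p z) (hsum : Summable p) :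
    ∃ C, 0 < C ∧ ∀ x m : ℕ, 0 < x → ∑ z ∈ Icc x m, p z ≤ C * (x : ℝ) ^ (-α) := by
  obtain ⟨c, -, htend⟩ := hDAN
  obtain ⟨C, hC⟩ := htend.isBoundedUnder_le.bddAbove_range
  refine ⟨max C 1, by positivity, fun x m hx => ?_⟩
  have hx0 : (0 : ℝ) < x := by exact_mod_cast hx
  have htsum : ∑ z ∈ Icc x m, p z ≤ ∑' k : ℕ, p ((x : ℤ) + (k : ℤ)) := by
    rw [← Ico_add_one_right_eq_Icc, sum_Ico_eq_sum_range]
    push_cast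
    exact (hsum.comp_injective fun a b h => by simpa using h).sum_le_tsum _ fun k _ => hnn _
  rw [Real.rpow_neg hx0.le, ← div_eq_mul_inv, le_div_iff₀ (by positivity), mul_comm]
  calc (x : ℝ) ^ α * ∑ z ∈ Icc x m, p z ≤ (x : ℝ) ^ α * ∑' k : ℕ, p ((x : ℤ) + (k : ℤ)) :=
        mul_le_mul_of_nonneg_left htsum (by positivity)
    _ ≤ max C 1 := (hC ⟨x, rfl⟩).trans (le_max_left _ _)

theorem sum_Icc_sum_Icc_sub_le {h : ℤ → ℝ} (hh : ∀ z, 0 ≤ h z) (n : ℕ) :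
    ∑ x ∈ Icc (-(n : ℤ)) n, ∑ y ∈ Icc (-(n : ℤ)) n, h (y - x)
      ≤ (2 * n + 1) * ∑ z ∈ Icc (-((2 * n : ℕ) : ℤ)) (2 * n : ℕ), h z := by
  calc ∑ x ∈ Icc (-(n : ℤ)) n, ∑ y ∈ Icc (-(n : ℤ)) n, h (y - x)
      ≤ ∑ _x ∈ Icc (-(n : ℤ)) n, ∑ z ∈ Icc (-((2 * n : ℕ) : ℤ)) (2 * n : ℕ), h z := by
        refine sum_le_sum fun x hx => ?_
        rw [← sum_image fun _ _ _ _ => sub_left_inj.1]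
        refine sum_le_sum_of_subset_of_nonneg (fun z hz => ?_) fun z _ _ => hh z
        simp only [mem_image, mem_Icc] at hx hz ⊢
        omega
    _ = (2 * n + 1) * ∑ z ∈ Icc (-((2 * n : ℕ) : ℤ)) (2 * n : ℕ), h z := by
        rw [sum_const, card_Icc_neg_self, nsmul_eq_mul]
        push_cast
        ring

theorem MemDAN.exists_sum_sum_mul_sq_le {p : ℤ → ℝ} {α : ℝ} (hDAN : MemDAN p α) (hα : α < 2)
    (hnn : ∀ z, 0 ≤ p z) (hp0 : p 0 = 0) (hsymm : ∀ z, p z = p (-z)) (hsum : Summable p) :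
    ∃ K, 0 < K ∧ ∀ n : ℕ, ∑ x ∈ Icc (-(n : ℤ)) n, ∑ y ∈ Icc (-(n : ℤ)) n,
      p (y - x) * ((y : ℝ) - x) ^ 2 ≤ K * ((2 * n + 1) ^ (-α) * (2 * n + 1) ^ 3) := by
  obtain ⟨C, hC, htail⟩ := hDAN.exists_sum_Icc_le hnn hsum
  have h2α : 0 < 2 - α := by linarith
  refine ⟨4 * C * (1 + (2 - α)⁻¹), by positivity, fun n => ?_⟩
  set N : ℝ := 2 * n + 1
  have hN0 : 0 < N := by positivity
  have hsym : ∑ z ∈ Icc (-((2 * n : ℕ) : ℤ)) (2 * n : ℕ), p z * (z : ℝ) ^ 2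
      = 2 * ∑ k ∈ Icc 1 (2 * n), p k * (k : ℝ) ^ 2 := by
    rw [sum_Icc_neg_self, mul_sum]
    simp only [hp0, zero_mul, zero_add, Int.cast_neg, neg_sq, ← hsymm]
    exact sum_congr rfl fun k _ => by push_cast; ring
  have hpow : N * N ^ (2 - α) = N ^ (-α) * N ^ 3 := by
    rw [show (2 : ℝ) - α = -α + 2 by ring, Real.rpow_add hN0]
    norm_cast
    ring
  calc ∑ x ∈ Icc (-(n : ℤ)) n, ∑ y ∈ Icc (-(n : ℤ)) n, p (y - x) * ((y : ℝ) - x) ^ 2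
      ≤ N * ∑ z ∈ Icc (-((2 * n : ℕ) : ℤ)) (2 * n : ℕ), p z * (z : ℝ) ^ 2 := by
        have := sum_Icc_sum_Icc_sub_le (h := fun z => p z * (z : ℝ) ^ 2)
          (fun z => mul_nonneg (hnn z) (sq_nonneg _)) n
        push_cast at this ⊢
        exact this
    _ ≤ N * (2 * (2 * C * (1 + (2 - α)⁻¹) * N ^ (2 - α))) := by
        rw [hsym]
        gcongr
        refine (sum_Icc_mul_sq_le_of_tail_le (fun z => hnn z) hα hC.le htail (2 * n)).trans ?_
        gcongr
        push_cast; linarith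
    _ = 4 * C * (1 + (2 - α)⁻¹) * (N ^ (-α) * N ^ 3) := by
        rw [← hpow]; ring

theorem sum_exSwap {η : Finset ℤ} {x y : ℤ} (hx : x ∈ η) (hy : y ∉ η) :
    ∑ u ∈ exSwap η x y, (u : ℝ) = ∑ u ∈ η, (u : ℝ) + y - x := by
  rw [exSwap, sum_insert (fun h => hy (mem_of_mem_erase h)), sum_erase_eq_sub hx]
  ring

theorem sum_exConfigs_dirichlet_sum (n k : ℕ) (p : ℤ → ℝ) :
    ∑ η ∈ exConfigs n (k + 1), ∑ x ∈ Icc (-(n : ℤ)) n, ∑ y ∈ Icc (-(n : ℤ)) n,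
        p (y - x) * (if x ∈ η ∧ y ∉ η then
          (∑ u ∈ exSwap η x y, (u : ℝ) - ∑ u ∈ η, (u : ℝ)) ^ 2 else 0)
      = (2 * n - 1).choose k * ∑ x ∈ Icc (-(n : ℤ)) n, ∑ y ∈ Icc (-(n : ℤ)) n,
          p (y - x) * ((y : ℝ) - x) ^ 2 := by
  have hterm : ∀ η x y, p (y - x) * (if x ∈ η ∧ y ∉ η then
      (∑ u ∈ exSwap η x y, (u : ℝ) - ∑ u ∈ η, (u : ℝ)) ^ 2 else 0)
        = if x ∈ η ∧ y ∉ η then p (y - x) * ((y : ℝ) - x) ^ 2 else 0 := by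
    intro η x y
    split_ifs with h
    · rw [sum_exSwap h.1 h.2]; ring
    · rw [mul_zero]
  simp only [hterm]
  rw [exConfigs, sum_congr rfl fun η hη =>
      sum_sum_ite_mem_and_notMem (mem_powersetCard.1 hη).1 _,
    sum_powersetCard_succ_sum_sum_sdiff, card_Icc_neg_self]
  congr 1
  exact sum_congr rfl fun x _ => sum_erase _ (by simp)

theorem exclusion_spectral_gap_upper_bound_general
    (α : ℝ) (hα2 : α < 2)
    (p : ℤ → ℝ) (hp : IsSymTransitionRate p)
    (hDAN : MemDAN p α) :
    ∃ κ₂ : ℝ, 0 < κ₂ ∧ ∀ n : ℕ, 1 ≤ n → ∀ ℓ : ℕ, 1 ≤ ℓ → ℓ ≤ 2 * n →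
      ∃ f : Finset ℤ → ℝ,
      (∃ η ∈ exConfigs n ℓ, f η ≠ 0) ∧
      (∑ η ∈ exConfigs n ℓ, f η) = 0 ∧
      (1 / 2) * ∑ η ∈ exConfigs n ℓ, ∑ x ∈ Finset.Icc (-(n : ℤ)) n,
          ∑ y ∈ Finset.Icc (-(n : ℤ)) n,
            p (y - x) * (if x ∈ η ∧ y ∉ η then (f (exSwap η x y) - f η) ^ 2 else 0) ≤
        κ₂ * (2 * (n : ℝ) + 1) ^ (-α) * ∑ η ∈ exConfigs n ℓ, (f η) ^ 2 := by
  obtain ⟨hnn, hp0, hsymm, hsum, -⟩ := hp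
  obtain ⟨K, hK, hE⟩ := hDAN.exists_sum_sum_mul_sq_le hα2 hnn hp0 hsymm hsum
  refine ⟨7 * K, by positivity, fun n hn ℓ hℓ1 hℓ2 => ?_⟩
  obtain ⟨k, rfl⟩ : ∃ k, ℓ = k + 1 := ⟨ℓ - 1, by omega⟩
  set M : ℝ := ↑((2 * n - 1).choose k)
  set S := ∑ x ∈ Icc (-(n : ℤ)) n, (x : ℝ) ^ 2
  have hM : 0 < M := Nat.cast_pos.2 (Nat.choose_pos (by omega))
  have hS := pow_three_le_sum_Icc_neg_self_sq hn
  have hvar : ∑ η ∈ exConfigs n (k + 1), (∑ u ∈ η, (u : ℝ)) ^ 2 = M * S := by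
    rw [exConfigs, sum_powersetCard_succ_sq_sum (sum_Icc_neg_self_intCast n), card_Icc_neg_self]
    rfl
  refine ⟨fun η => ∑ u ∈ η, (u : ℝ), ?_, ?_, ?_⟩
  · have hS0 : 0 < S := by linarith [(by positivity : (0 : ℝ) < (2 * n + 1) ^ 3)]
    obtain ⟨η, hη, hne⟩ := exists_ne_zero_of_sum_ne_zero (hvar.trans_ne (mul_pos hM hS0).ne')
    exact ⟨η, hη, ne_zero_pow two_ne_zero hne⟩
  · rw [exConfigs, sum_powersetCard_succ_sum, sum_Icc_neg_self_intCast, mul_zero]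
  · calc _ = 1 / 2 * (M * ∑ x ∈ Icc (-(n : ℤ)) n, ∑ y ∈ Icc (-(n : ℤ)) n,
            p (y - x) * ((y : ℝ) - x) ^ 2) := congrArg _ (sum_exConfigs_dirichlet_sum n k p)
      _ ≤ 1 / 2 * (M * (K * ((2 * n + 1) ^ (-α) * (2 * n + 1) ^ 3))) := by gcongr; exact hE n
      _ ≤ 1 / 2 * (M * (K * ((2 * n + 1) ^ (-α) * (14 * S)))) := by gcongr
      _ = 7 * K * (2 * n + 1) ^ (-α) * (M * S) := by ring
      _ = _ := by rw [hvar]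

theorem exclusion_spectral_gap_upper_bound
    (α : ℝ) (hα0 : 0 < α) (hα2 : α < 2)
    (p : ℤ → ℝ) (hp : IsSymTransitionRate p) (hp1 : 0 < p 1)
    (hDAN : MemDAN p α) :
    ∃ κ₂ : ℝ, 0 < κ₂ ∧ ∀ n : ℕ, 1 ≤ n → ∀ ℓ : ℕ, 1 ≤ ℓ → ℓ ≤ 2 * n →
      ∃ f : Finset ℤ → ℝ,
      (∃ η ∈ exConfigs n ℓ, f η ≠ 0) ∧
      (∑ η ∈ exConfigs n ℓ, f η) = 0 ∧
      (1 / 2) * ∑ η ∈ exConfigs n ℓ, ∑ x ∈ Finset.Icc (-(n : ℤ)) n,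
          ∑ y ∈ Finset.Icc (-(n : ℤ)) n,
            p (y - x) * (if x ∈ η ∧ y ∉ η then (f (exSwap η x y) - f η) ^ 2 else 0) ≤
        κ₂ * (2 * (n : ℝ) + 1) ^ (-α) * ∑ η ∈ exConfigs n ℓ, (f η) ^ 2 :=
  exclusion_spectral_gap_upper_bound_general α hα2 p hp hDAN
end

section
/- Let K ≥ 1/2 be fixed. Then for any K-subpolynomial function φ : ℕ → [0,∞), one has φ(x) ≤ 2K φ(1) x^ν for every positive integer x, where ν = 1 + (log K)/(log 2). -/
/-!
Splitting `x ≤ 2 ^ (n + 1)` as `(x - 2 ^ n) + 2 ^ n` and inducting on `n` gives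
`φ x ≤ (2K) ^ n φ(1)` whenever `x ≤ 2 ^ n`. Taking `2 ^ m ≤ x < 2 ^ (m + 1)`, the factor
`(2K) ^ m = (2 ^ m) ^ ν` is at most `x ^ ν`, since `2 ^ ν = 2K` with `ν ≥ 0`.
-/

open Finset Filter Topology Real

/-- `φ : ℕ → [0,∞)` (defined on the positive integers) is `K`-subpolynomial if
`φ(x+y) ≤ K (φ(x) + φ(y))` for all positive `x, y`. -/
def IsSubpolynomial (K : ℝ) (φ : ℕ → ℝ) : Prop :=
  (∀ x : ℕ, 0 ≤ φ x) ∧ ∀ x y : ℕ, 1 ≤ x → 1 ≤ y → φ (x + y) ≤ K * (φ x + φ y)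

theorem IsSubpolynomial.le_pow_mul_of_le_two_pow {K : ℝ} (hK : 1 / 2 ≤ K) {φ : ℕ → ℝ}
    (hφ : IsSubpolynomial K φ) (n : ℕ) {x : ℕ} (hx : 1 ≤ x) (hxn : x ≤ 2 ^ n) :
    φ x ≤ (2 * K) ^ n * φ 1 := by
  obtain ⟨hφ_nonneg, hφ_sub⟩ := hφ
  induction n generalizing x with
  | zero =>
    obtain rfl : x = 1 := by simp at hxn; omega
    simp
  | succ n ih =>
    by_cases hsmall : x ≤ 2 ^ n
    · calc φ x ≤ (2 * K) ^ n * φ 1 := ih hx hsmall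
        _ ≤ (2 * K) ^ (n + 1) * φ 1 := by
          gcongr
          · exact hφ_nonneg 1
          · linarith
          · omega
    · have hsplit : x = (x - 2 ^ n) + 2 ^ n := by omega
      have hrest : x - 2 ^ n ≤ 2 ^ n := by rw [pow_succ] at hxn; omega
      calc φ x = φ ((x - 2 ^ n) + 2 ^ n) := by rw [← hsplit]
        _ ≤ K * (φ (x - 2 ^ n) + φ (2 ^ n)) := hφ_sub _ _ (by omega) Nat.one_le_two_pow
        _ ≤ K * ((2 * K) ^ n * φ 1 + (2 * K) ^ n * φ 1) := by
          have hK0 : 0 ≤ K := by linarith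
          gcongr
          · exact ih (by omega) hrest
          · exact ih Nat.one_le_two_pow le_rfl
        _ = (2 * K) ^ (n + 1) * φ 1 := by ring

theorem Real.pow_le_rpow_logb_of_pow_le {b c x : ℝ} (hb : 1 < b) (hc : 1 ≤ c) {m : ℕ}
    (hm : b ^ m ≤ x) : c ^ m ≤ x ^ logb b c := by
  calc c ^ m = (b ^ logb b c) ^ m := by rw [rpow_logb (by linarith) hb.ne' (by linarith)]
    _ = (b ^ m) ^ logb b c := by
      rw [← rpow_natCast, ← rpow_natCast, ← rpow_mul (by linarith), ← rpow_mul (by linarith),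
        mul_comm]
    _ ≤ x ^ logb b c := rpow_le_rpow (by positivity) hm (logb_nonneg hb hc)

theorem Real.one_add_log_div_log_two {K : ℝ} (hK : K ≠ 0) :
    1 + log K / log 2 = logb 2 (2 * K) := by
  rw [logb_mul two_ne_zero hK, logb_self_eq_one one_lt_two, logb]

theorem subpolynomial_polynomial_bound
    (K : ℝ) (hK : 1 / 2 ≤ K) (φ : ℕ → ℝ) (hφ : IsSubpolynomial K φ) :
    ∀ x : ℕ, 1 ≤ x →
      φ x ≤ 2 * K * φ 1 * (x : ℝ) ^ (1 + Real.log K / Real.log 2) := by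
  intro x hx
  set m := Nat.log 2 x
  have hx_le_pow : x ≤ 2 ^ (m + 1) := (Nat.lt_pow_succ_log_self one_lt_two x).le
  have hpow_le_x : (2 : ℝ) ^ m ≤ x := by exact_mod_cast Nat.pow_log_le_self 2 (by omega)
  rw [one_add_log_div_log_two (by linarith)]
  calc φ x ≤ (2 * K) ^ (m + 1) * φ 1 := hφ.le_pow_mul_of_le_two_pow hK (m + 1) hx hx_le_pow
    _ = 2 * K * φ 1 * (2 * K) ^ m := by ring
    _ ≤ 2 * K * φ 1 * (x : ℝ) ^ logb 2 (2 * K) := by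
      have hφ1 : 0 ≤ φ 1 := hφ.1 1
      gcongr
      exact pow_le_rpow_logb_of_pow_le one_lt_two (by linarith) hpow_le_x
end

section
/- Let n ∈ ℕ and f : Λ_n → ℝ. Define φ : ℕ → [0,∞) by φ(k) = ∑_{x=-n}^{n-k} (f(x+k) - f(x))² for 1 ≤ k ≤ 2n, and φ(k) = 0 for k > 2n. Then φ is 2-subpolynomial, i.e. φ(k+j) ≤ 2(φ(k) + φ(j)) for all positive integers k, j. -/
/-! The increment over a gap `k + j` is the sum of an increment over `j` and one over `k`,
so `(u + v)² ≤ 2(u² + v²)` bounds `φ (k + j)` termwise by two sums which, after shifting the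
first by `j`, are partial sums of `φ k` and `φ j`. -/

open Finset

noncomputable def incrementEnergy (f : ℤ → ℝ) (a b k : ℤ) : ℝ :=
  ∑ x ∈ Icc a (b - k), (f (x + k) - f x) ^ 2

theorem incrementEnergy_mono (f : ℤ → ℝ) (k : ℤ) {a a' b b' : ℤ} (ha : a ≤ a') (hb : b' ≤ b) :
    incrementEnergy f a' b' k ≤ incrementEnergy f a b k :=
  sum_le_sum_of_subset_of_nonneg (Icc_subset_Icc ha (by omega)) fun _ _ _ => sq_nonneg _

theorem incrementEnergy_add_le (f : ℤ → ℝ) (a b k j : ℤ) :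
    incrementEnergy f a b (k + j) ≤
      2 * (incrementEnergy f (a + j) b k + incrementEnergy f a (b - k) j) := by
  have shift : incrementEnergy f (a + j) b k =
      ∑ x ∈ Icc a (b - (k + j)), (f (x + j + k) - f (x + j)) ^ 2 := by
    rw [incrementEnergy, show b - k = b - (k + j) + j by ring, ← map_add_right_Icc, sum_map]
    rfl
  rw [shift, incrementEnergy, incrementEnergy, sub_sub, mul_add, mul_sum, mul_sum, ← sum_add_distrib]
  refine sum_le_sum fun x _ => ?_
  calc (f (x + (k + j)) - f x) ^ 2
      = ((f (x + j + k) - f (x + j)) + (f (x + j) - f x)) ^ 2 := by ring_nf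
    _ ≤ 2 * (f (x + j + k) - f (x + j)) ^ 2 + 2 * (f (x + j) - f x) ^ 2 := by
      linarith [add_sq_le (a := f (x + j + k) - f (x + j)) (b := f (x + j) - f x)]

theorem increment_function_is_two_subpolynomial_general
    (n : ℕ) (f : ℤ → ℝ)
    (φ : ℕ → ℝ)
    (hφ : ∀ k : ℕ, φ k = ∑ x ∈ Finset.Icc (-(n : ℤ)) ((n : ℤ) - k),
      (f (x + k) - f x) ^ 2) :
    ∀ k j : ℕ, 1 ≤ k → 1 ≤ j → φ (k + j) ≤ 2 * (φ k + φ j) := by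
  intro k j _ _
  have hφE (m : ℕ) : φ m = incrementEnergy f (-n) n m := hφ m
  rw [hφE, hφE, hφE, Nat.cast_add]
  calc incrementEnergy f (-n) n (k + j)
      ≤ 2 * (incrementEnergy f (-n + j) n k + incrementEnergy f (-n) (n - k) j) :=
        incrementEnergy_add_le f _ _ _ _
    _ ≤ 2 * (incrementEnergy f (-n) n k + incrementEnergy f (-n) n j) := by
      gcongr
      · exact incrementEnergy_mono f k (by omega) le_rfl
      · exact incrementEnergy_mono f j le_rfl (by omega)

theorem increment_function_is_two_subpolynomial
    (n : ℕ) (hn : 1 ≤ n) (f : ℤ → ℝ)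
    (φ : ℕ → ℝ)
    (hφ : ∀ k : ℕ, φ k = ∑ x ∈ Finset.Icc (-(n : ℤ)) ((n : ℤ) - k),
      (f (x + k) - f x) ^ 2) :
    ∀ k j : ℕ, 1 ≤ k → 1 ≤ j → φ (k + j) ≤ 2 * (φ k + φ j) :=
  increment_function_is_two_subpolynomial_general n f φ hφ
end
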